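/- Let 𝓟 and 𝓔 be nonempty sets of density matrices on ℂ^d, and let t ∈ (0,1) (in the paper, t = 2^{−nr} with n ≥ 1 and rate r > 0). Then the infimum of ε ∈ [0,1] such that there exists a CPTP map F from d×d complex matrices to 2×2 complex matrices with T(F(ρ), |1⟩⟨1|) ≤ ε for all ρ ∈ 𝓟 and such that for every τ ∈ 𝓔 there exists M_τ ∈ [1/t, ∞) with F(τ) = π_{M_τ}, equals the infimum of sup_{ρ∈𝓟} tr[(I−E)ρ] over all tests E (Hermitian with 0 ≤ E ≤ I) satisfying sup_{τ∈𝓔} tr[Eτ] ≤ t. -/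

import Mathlib

/-!
Channels into the battery and tests correspond. A channel `F` gives the test `E = F†(|1⟩⟨1|)`:
`tr[E τ] = F(τ)₁₁ = 1/M_τ ≤ t`, and `tr[(1 - E) ρ] = F(ρ)₀₀` is at most `T(F(ρ), |1⟩⟨1|)`, because a
traceless Hermitian `2 × 2` matrix has trace norm `2 √(a² + |b|²) ≥ 2|a|`. Conversely a test `E`
gives the measure-and-prepare channel `ρ ↦ diag(tr[(1 - E) ρ], tr[E ρ])`, which sends `τ` to
`π_{1/tr[E τ]}` and `ρ` to a state at trace distance exactly `tr[(1 - E) ρ]` from `|1⟩⟨1|`. This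
needs `tr[E τ] > 0`, which mixing `E` with a little of the trivial test `t · 1` ensures at an
arbitrarily small cost in type-I error.
-/

open Matrix ComplexOrder

/-- Trace norm of a complex matrix: the trace of `sqrt(AᴴA)` (sum of singular values). -/
noncomputable def traceNorm {n : Type*} [Fintype n] [DecidableEq n]
    (A : Matrix n n ℂ) : ℝ :=
  (((Matrix.posSemidef_conjTranspose_mul_self A).1.eigenvectorUnitary : Matrix n n ℂ) *
      Matrix.diagonal ((fun x : ℝ => (x : ℂ)) ∘ Real.sqrt ∘ (Matrix.posSemidef_conjTranspose_mul_self A).1.eigenvalues) *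
      (star (Matrix.posSemidef_conjTranspose_mul_self A).1.eigenvectorUnitary : Matrix n n ℂ)).trace.re

/-- Trace distance `T(X,Y) = ‖X - Y‖₁ / 2`. -/
noncomputable def traceDist {n : Type*} [Fintype n] [DecidableEq n]
    (X Y : Matrix n n ℂ) : ℝ :=
  traceNorm (X - Y) / 2

/-- A density matrix: positive semidefinite with unit trace. -/
def IsDensityMatrix {n : Type*} [Fintype n] (ρ : Matrix n n ℂ) : Prop :=
  ρ.PosSemidef ∧ ρ.trace = 1

/-- The battery Gibbs state `π_M = diag(1 - 1/M, 1/M)`. -/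
noncomputable def piM (M : ℝ) : Matrix (Fin 2) (Fin 2) ℂ :=
  Matrix.diagonal ![((1 - 1/M : ℝ) : ℂ), ((1/M : ℝ) : ℂ)]

/-- The excited battery state `|1⟩⟨1| = diag(0,1)`. -/
def ket1 : Matrix (Fin 2) (Fin 2) ℂ :=
  Matrix.diagonal ![0, 1]

/-- A test (POVM effect): `0 ≤ E ≤ I`. -/
def IsTest {n : Type*} [Fintype n] [DecidableEq n] (E : Matrix n n ℂ) : Prop :=
  E.PosSemidef ∧ (1 - E).PosSemidef

/-- Choi matrix `Σ_{ij} E_{ij} ⊗ F(E_{ij})` of a linear map on matrices. -/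
noncomputable def choiMatrix {n m : Type*} [Fintype n] [DecidableEq n] [Fintype m]
    (F : Matrix n n ℂ →ₗ[ℂ] Matrix m m ℂ) :
    Matrix (n × m) (n × m) ℂ :=
  fun p q => F (Matrix.single p.1 q.1 1) p.2 q.2

/-- Completely positive (positive semidefinite Choi matrix) and trace preserving. -/
def IsCPTP {n m : Type*} [Fintype n] [DecidableEq n] [Fintype m]
    (F : Matrix n n ℂ →ₗ[ℂ] Matrix m m ℂ) : Prop :=
  (choiMatrix F).PosSemidef ∧ ∀ X, (F X).trace = X.trace

/-- `n`-fold Kronecker (tensor) power of a `2 × 2` matrix, indexed by bit strings. -/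
def tensPow (A : Matrix (Fin 2) (Fin 2) ℂ) (n : ℕ) :
    Matrix (Fin n → Fin 2) (Fin n → Fin 2) ℂ :=
  fun x y => ∏ i, A (x i) (y i)

/-- `ε`-ball (in trace distance) of density matrices around a set `𝓟`. -/
noncomputable def metBall {n : Type*} [Fintype n] [DecidableEq n]
    (ε : ℝ) (P : Set (Matrix n n ℂ)) : Set (Matrix n n ℂ) :=
  {ω | IsDensityMatrix ω ∧ ∃ ρ ∈ P, traceDist ω ρ ≤ ε}


section Tests

variable {n : Type*} [Fintype n] [DecidableEq n]

lemma Matrix.PosSemidef.trace_mul_nonneg {A B : Matrix n n ℂ} (hA : A.PosSemidef)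
    (hB : B.PosSemidef) : 0 ≤ (A * B).trace := by
  open scoped MatrixOrder in
  obtain ⟨C, rfl⟩ := CStarAlgebra.nonneg_iff_eq_star_mul_self.mp hA.nonneg
  rw [Matrix.mul_assoc, trace_mul_comm, Matrix.mul_assoc, ← Matrix.mul_assoc]
  exact (hB.mul_mul_conjTranspose_same C).trace_nonneg

lemma Matrix.PosSemidef.trace_mul_eq_re {A B : Matrix n n ℂ} (hA : A.PosSemidef)
    (hB : B.PosSemidef) : (A * B).trace = ((A * B).trace.re : ℂ) :=
  Complex.eq_re_of_ofReal_le (r := 0) (by simpa using hA.trace_mul_nonneg hB)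

variable {E ρ : Matrix n n ℂ}

lemma IsTest.one_sub (hE : IsTest E) : IsTest (1 - E) :=
  ⟨hE.2, by simpa using hE.1⟩

lemma IsTest.smul_add_smul {E' : Matrix n n ℂ} (hE : IsTest E) (hE' : IsTest E') {a b : ℝ}
    (ha : 0 ≤ a) (hb : 0 ≤ b) (hab : a + b = 1) : IsTest (a • E + b • E') := by
  refine ⟨(hE.1.smul ha).add (hE'.1.smul hb), ?_⟩
  have : 1 - (a • E + b • E') = a • (1 - E) + b • (1 - E') := by
    linear_combination (norm := module) -(hab • (1 : Matrix n n ℂ))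
  rw [this]
  exact (hE.2.smul ha).add (hE'.2.smul hb)

lemma isTest_smul_one {t : ℝ} (ht₀ : 0 ≤ t) (ht₁ : t ≤ 1) : IsTest (t • 1 : Matrix n n ℂ) := by
  refine ⟨PosSemidef.one.smul ht₀, ?_⟩
  rw [show (1 : Matrix n n ℂ) - t • 1 = (1 - t) • 1 by module]
  exact PosSemidef.one.smul (sub_nonneg.mpr ht₁)

lemma trace_one_sub_mul_of_trace_eq_one (hρ : ρ.trace = 1) :
    ((1 - E) * ρ).trace = 1 - (E * ρ).trace := by
  rw [Matrix.sub_mul, Matrix.one_mul, trace_sub, hρ]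

lemma IsTest.trace_mul_re_nonneg (hE : IsTest E) (hρ : ρ.PosSemidef) : 0 ≤ (E * ρ).trace.re :=
  (Complex.nonneg_iff.mp (hE.1.trace_mul_nonneg hρ)).1

lemma IsTest.trace_mul_re_le_one (hE : IsTest E) (hρ : IsDensityMatrix ρ) :
    (E * ρ).trace.re ≤ 1 := by
  have := hE.one_sub.trace_mul_re_nonneg hρ.1
  rw [trace_one_sub_mul_of_trace_eq_one hρ.2, Complex.sub_re, Complex.one_re] at this
  linarith

end Tests

lemma traceNorm_eq_trace_cfc_sqrt {n : Type*} [Fintype n] [DecidableEq n] (A : Matrix n n ℂ) :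
    traceNorm A = (cfc Real.sqrt (Aᴴ * A)).trace.re := by
  rw [traceNorm, (posSemidef_conjTranspose_mul_self A).1.cfc_eq]
  rfl

lemma conjTranspose_mul_self_fin_two {Δ : Matrix (Fin 2) (Fin 2) ℂ} (hΔ : Δ.IsHermitian)
    (htr : Δ.trace = 0) :
    Δᴴ * Δ = algebraMap ℝ _ ((Δ 0 0).re ^ 2 + Complex.normSq (Δ 0 1)) := by
  set a := (Δ 0 0).re
  have h00 : Δ 0 0 = a := (hΔ.coe_re_apply_self 0).symm
  have h11 : Δ 1 1 = -Δ 0 0 := by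
    rw [trace_fin_two] at htr
    linear_combination htr
  have h10 : Δ 1 0 = star (Δ 0 1) := by
    simpa using (congrFun (congrFun hΔ.eq 1) 0).symm
  rw [hΔ.eq]
  ext i j
  fin_cases i <;> fin_cases j <;>
    simp [mul_apply, Fin.sum_univ_two, algebraMap_matrix_apply, h00, h11, h10,
      Complex.normSq_eq_conj_mul_self] <;> ring

lemma traceNorm_fin_two {Δ : Matrix (Fin 2) (Fin 2) ℂ} (hΔ : Δ.IsHermitian) (htr : Δ.trace = 0) :
    traceNorm Δ = 2 * √((Δ 0 0).re ^ 2 + Complex.normSq (Δ 0 1)) := by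
  rw [traceNorm_eq_trace_cfc_sqrt, conjTranspose_mul_self_fin_two hΔ htr, cfc_algebraMap]
  simp [algebraMap_matrix_apply, trace_fin_two]
  ring

lemma isHermitian_ket1 : ket1.IsHermitian := by
  simp [ket1, IsHermitian, diagonal_conjTranspose]

lemma re_apply_zero_zero_le_traceDist_ket1 {σ : Matrix (Fin 2) (Fin 2) ℂ} (hσ : σ.IsHermitian)
    (htr : σ.trace = 1) : (σ 0 0).re ≤ traceDist σ ket1 := by
  have hΔtr : (σ - ket1).trace = 0 := by simp [trace_sub, htr, ket1]
  rw [traceDist, traceNorm_fin_two (hσ.sub isHermitian_ket1) hΔtr]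
  have h00 : (σ - ket1) 0 0 = σ 0 0 := by simp [ket1]
  rw [h00, mul_div_cancel_left₀ _ two_ne_zero]
  exact (le_abs_self _).trans (Real.abs_le_sqrt (le_add_of_nonneg_right (Complex.normSq_nonneg _)))

lemma traceDist_diagonal_ket1 {x y : ℝ} (hx : 0 ≤ x) (hxy : x + y = 1) :
    traceDist (diagonal ![(x : ℂ), (y : ℂ)]) ket1 = x := by
  have hΔ : diagonal ![(x : ℂ), (y : ℂ)] - ket1 = diagonal ![(x : ℂ), (-x : ℝ)] := by
    rw [ket1, diagonal_sub, eq_sub_of_add_eq' hxy]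
    ext i j
    fin_cases i <;> fin_cases j <;> simp
  have hH : (diagonal ![(x : ℂ), (-x : ℝ)]).IsHermitian := by
    simp [IsHermitian, diagonal_conjTranspose]
  rw [traceDist, hΔ, traceNorm_fin_two hH (by simp)]
  simp [Real.sqrt_sq hx]

section Channels

open scoped Kronecker

variable {n m : Type*} [Fintype n] [DecidableEq n] [Fintype m]

lemma apply_eq_sum_choiMatrix (F : Matrix n n ℂ →ₗ[ℂ] Matrix m m ℂ) (X : Matrix n n ℂ)
    (b b' : m) : F X b b' = ∑ k, ∑ l, X k l * choiMatrix F (k, b) (l, b') := by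
  conv_lhs => rw [matrix_eq_sum_single X]
  simp only [map_sum, Matrix.sum_apply]
  refine Finset.sum_congr rfl fun k _ => Finset.sum_congr rfl fun l _ => ?_
  rw [show single k l (X k l) = X k l • single k l 1 by simp, map_smul]
  rfl

lemma isHermitian_apply_of_isHermitian_choiMatrix {F : Matrix n n ℂ →ₗ[ℂ] Matrix m m ℂ}
    (hF : (choiMatrix F).IsHermitian) {X : Matrix n n ℂ} (hX : X.IsHermitian) :
    (F X).IsHermitian := by
  ext b b'
  rw [conjTranspose_apply, apply_eq_sum_choiMatrix, apply_eq_sum_choiMatrix, star_sum,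
    Finset.sum_comm]
  refine Finset.sum_congr rfl fun k _ => ?_
  rw [star_sum]
  refine Finset.sum_congr rfl fun l _ => ?_
  rw [star_mul', ← conjTranspose_apply, ← conjTranspose_apply, hX.eq, hF.eq]

/-- The effect `F†(|b⟩⟨b|)` of the dual map, read off the Choi matrix. -/
noncomputable def choiBlock (F : Matrix n n ℂ →ₗ[ℂ] Matrix m m ℂ) (b : m) : Matrix n n ℂ :=
  ((choiMatrix F).submatrix (·, b) (·, b))ᵀ

lemma trace_choiBlock_mul (F : Matrix n n ℂ →ₗ[ℂ] Matrix m m ℂ) (b : m) (X : Matrix n n ℂ) :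
    (choiBlock F b * X).trace = F X b b := by
  rw [apply_eq_sum_choiMatrix, trace, Finset.sum_comm]
  simp only [diag_apply, mul_apply, choiBlock, transpose_apply, submatrix_apply, mul_comm]

lemma posSemidef_choiBlock {F : Matrix n n ℂ →ₗ[ℂ] Matrix m m ℂ}
    (hF : (choiMatrix F).PosSemidef) (b : m) : (choiBlock F b).PosSemidef :=
  (hF.submatrix _).transpose

lemma sum_choiBlock {F : Matrix n n ℂ →ₗ[ℂ] Matrix m m ℂ} (hF : ∀ X, (F X).trace = X.trace) :
    ∑ b, choiBlock F b = 1 := by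
  ext i j
  simp only [Matrix.sum_apply, choiBlock, transpose_apply, submatrix_apply, choiMatrix]
  change (F (single j i 1)).trace = _
  rw [hF]
  obtain rfl | hij := eq_or_ne i j
  · rw [trace_single_eq_same, one_apply_eq]
  · rw [trace_single_eq_of_ne _ _ _ hij.symm, one_apply_ne hij]

lemma IsCPTP.one_sub_choiBlock_one {F : Matrix n n ℂ →ₗ[ℂ] Matrix (Fin 2) (Fin 2) ℂ}
    (hF : IsCPTP F) : 1 - choiBlock F 1 = choiBlock F 0 := by
  rw [← sum_choiBlock hF.2, Fin.sum_univ_two, add_sub_cancel_right]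

lemma IsCPTP.isTest_choiBlock_one {F : Matrix n n ℂ →ₗ[ℂ] Matrix (Fin 2) (Fin 2) ℂ}
    (hF : IsCPTP F) : IsTest (choiBlock F 1) :=
  ⟨posSemidef_choiBlock hF.1 1, hF.one_sub_choiBlock_one ▸ posSemidef_choiBlock hF.1 0⟩

noncomputable def measurePrepare (E : Matrix n n ℂ) :
    Matrix n n ℂ →ₗ[ℂ] Matrix (Fin 2) (Fin 2) ℂ where
  toFun X := diagonal ![((1 - E) * X).trace, (E * X).trace]
  map_add' X Y := by simp [Matrix.mul_add, diagonal_add]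
  map_smul' c X := by simp [← diagonal_smul, Matrix.smul_cons]

lemma choiMatrix_measurePrepare (E : Matrix n n ℂ) :
    choiMatrix (measurePrepare E) =
      (1 - E)ᵀ ⊗ₖ diagonal ![1, 0] + Eᵀ ⊗ₖ diagonal ![0, 1] := by
  ext ⟨i, b⟩ ⟨j, b'⟩
  fin_cases b <;> fin_cases b' <;>
    simp [choiMatrix, measurePrepare, trace_mul_single, one_apply, eq_comm]

lemma IsTest.isCPTP_measurePrepare {E : Matrix n n ℂ} (hE : IsTest E) :
    IsCPTP (measurePrepare E) := by
  refine ⟨?_, fun X => ?_⟩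
  · rw [choiMatrix_measurePrepare]
    exact (hE.2.transpose.kronecker (.diagonal (by simp [Pi.le_def, Fin.forall_fin_two]))).add
      (hE.1.transpose.kronecker (.diagonal (by simp [Pi.le_def, Fin.forall_fin_two])))
  · simp [measurePrepare, ← trace_add, ← Matrix.add_mul]

end Channels

section TypeIError

variable {n : Type*} [Fintype n] [DecidableEq n] {P : Set (Matrix n n ℂ)} {E : Matrix n n ℂ}

noncomputable def typeIError (P : Set (Matrix n n ℂ)) (E : Matrix n n ℂ) : ℝ :=
  sSup {r : ℝ | ∃ ρ ∈ P, r = ((1 - E) * ρ).trace.re}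

lemma typeIError_nonneg (hP : ∀ ρ ∈ P, IsDensityMatrix ρ) (hE : IsTest E) :
    0 ≤ typeIError P E :=
  Real.sSup_nonneg <| by
    rintro _ ⟨ρ, hρ, rfl⟩
    exact hE.one_sub.trace_mul_re_nonneg (hP ρ hρ).1

lemma typeIError_le {e : ℝ} (he : 0 ≤ e) (h : ∀ ρ ∈ P, ((1 - E) * ρ).trace.re ≤ e) :
    typeIError P E ≤ e :=
  Real.sSup_le (by rintro _ ⟨ρ, hρ, rfl⟩; exact h ρ hρ) he

lemma typeIError_le_one (hP : ∀ ρ ∈ P, IsDensityMatrix ρ) (hE : IsTest E) :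
    typeIError P E ≤ 1 :=
  typeIError_le zero_le_one fun ρ hρ => hE.one_sub.trace_mul_re_le_one (hP ρ hρ)

lemma le_typeIError (hP : ∀ ρ ∈ P, IsDensityMatrix ρ) (hE : IsTest E) {ρ : Matrix n n ℂ}
    (hρ : ρ ∈ P) : ((1 - E) * ρ).trace.re ≤ typeIError P E :=
  le_csSup ⟨1, by rintro _ ⟨σ, hσ, rfl⟩; exact hE.one_sub.trace_mul_re_le_one (hP σ hσ)⟩
    ⟨ρ, hρ, rfl⟩

end TypeIError

section Reduction

variable {n : Type*} [Fintype n] [DecidableEq n] {P 𝓔 : Set (Matrix n n ℂ)}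

lemma typeIError_choiBlock_one_le {F : Matrix n n ℂ →ₗ[ℂ] Matrix (Fin 2) (Fin 2) ℂ}
    (hF : IsCPTP F) (hP : ∀ ρ ∈ P, IsDensityMatrix ρ) {e : ℝ} (he : 0 ≤ e)
    (hFP : ∀ ρ ∈ P, traceDist (F ρ) ket1 ≤ e) : typeIError P (choiBlock F 1) ≤ e := by
  refine typeIError_le he fun ρ hρ => ?_
  rw [hF.one_sub_choiBlock_one, trace_choiBlock_mul]
  refine le_trans ?_ (hFP ρ hρ)
  exact re_apply_zero_zero_le_traceDist_ket1
    (isHermitian_apply_of_isHermitian_choiMatrix hF.1.1 (hP ρ hρ).1.1) ((hF.2 ρ).trans (hP ρ hρ).2)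

lemma trace_choiBlock_one_mul_re_le {F : Matrix n n ℂ →ₗ[ℂ] Matrix (Fin 2) (Fin 2) ℂ}
    {τ : Matrix n n ℂ} {t M : ℝ} (ht : 0 < t) (hM : 1 / t ≤ M) (hFτ : F τ = piM M) :
    (choiBlock F 1 * τ).trace.re ≤ t := by
  rw [trace_choiBlock_mul, hFτ, piM]
  simpa using (one_div_le ht ((one_div_pos.mpr ht).trans_le hM)).mp hM

lemma IsTest.measurePrepare_apply {E ρ : Matrix n n ℂ} (hE : IsTest E) (hρ : IsDensityMatrix ρ) :
    measurePrepare E ρ = diagonal ![((1 - (E * ρ).trace.re : ℝ) : ℂ), ((E * ρ).trace.re : ℂ)] := by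
  rw [measurePrepare, LinearMap.coe_mk, AddHom.coe_mk, trace_one_sub_mul_of_trace_eq_one hρ.2]
  conv_lhs => rw [hE.1.trace_mul_eq_re hρ.1]
  push_cast
  rfl

lemma IsTest.exists_channel {E : Matrix n n ℂ} {t : ℝ} (hE : IsTest E)
    (hP : ∀ ρ ∈ P, IsDensityMatrix ρ) (h𝓔 : ∀ τ ∈ 𝓔, IsDensityMatrix τ)
    (hE𝓔 : ∀ τ ∈ 𝓔, 0 < (E * τ).trace.re ∧ (E * τ).trace.re ≤ t) :
    typeIError P E ∈ Set.Icc (0 : ℝ) 1 ∧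
      ∃ F : Matrix n n ℂ →ₗ[ℂ] Matrix (Fin 2) (Fin 2) ℂ,
        IsCPTP F ∧ (∀ ρ ∈ P, traceDist (F ρ) ket1 ≤ typeIError P E) ∧
        ∀ τ ∈ 𝓔, ∃ Mτ : ℝ, 1 / t ≤ Mτ ∧ F τ = piM Mτ := by
  refine ⟨⟨typeIError_nonneg hP hE, typeIError_le_one hP hE⟩, measurePrepare E,
    hE.isCPTP_measurePrepare, fun ρ hρ => ?_, fun τ hτ => ?_⟩
  · have hρ' := hP ρ hρ
    rw [hE.measurePrepare_apply hρ',
      traceDist_diagonal_ket1 (by linarith [hE.trace_mul_re_le_one hρ']) (by ring)]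
    simpa [trace_one_sub_mul_of_trace_eq_one hρ'.2] using le_typeIError hP hE hρ
  · refine ⟨1 / (E * τ).trace.re, one_div_le_one_div_of_le (hE𝓔 τ hτ).1 (hE𝓔 τ hτ).2, ?_⟩
    rw [hE.measurePrepare_apply (h𝓔 τ hτ), piM, one_div_one_div]

lemma IsTest.exists_trace_mul_pos {E : Matrix n n ℂ} {t ε : ℝ} (hE : IsTest E) (ht₀ : 0 < t)
    (ht₁ : t ≤ 1) (hε : 0 < ε) (hP : ∀ ρ ∈ P, IsDensityMatrix ρ)
    (h𝓔 : ∀ τ ∈ 𝓔, IsDensityMatrix τ) (hE𝓔 : ∀ τ ∈ 𝓔, (E * τ).trace.re ≤ t) :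
    ∃ E', IsTest E' ∧ (∀ τ ∈ 𝓔, 0 < (E' * τ).trace.re ∧ (E' * τ).trace.re ≤ t) ∧
      typeIError P E' ≤ typeIError P E + ε := by
  set l := min ε 1
  have hl₀ : 0 < l := lt_min hε one_pos
  have hl₁ : l ≤ 1 := min_le_right ε 1
  have hE' : IsTest ((1 - l) • E + l • (t • 1)) :=
    hE.smul_add_smul (isTest_smul_one ht₀.le ht₁) (by linarith) hl₀.le (by ring)
  have htr : ∀ ρ : Matrix n n ℂ, IsDensityMatrix ρ →
      (((1 - l) • E + l • (t • 1)) * ρ).trace.re = (1 - l) * (E * ρ).trace.re + l * t := by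
    intro ρ hρ
    simp [Matrix.add_mul, trace_add, hρ.2]
  refine ⟨_, hE', fun τ hτ => ?_, ?_⟩
  · have hx₀ := hE.trace_mul_re_nonneg (h𝓔 τ hτ).1
    have hxt := hE𝓔 τ hτ
    rw [htr τ (h𝓔 τ hτ)]
    constructor <;> nlinarith
  · refine typeIError_le (by linarith [typeIError_nonneg hP hE]) fun ρ hρ => ?_
    have hρ' := hP ρ hρ
    have hle := le_typeIError hP hE hρ
    simp only [trace_one_sub_mul_of_trace_eq_one hρ'.2, Complex.sub_re, Complex.one_re] at hle ⊢
    rw [htr ρ hρ']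
    nlinarith [hE.trace_mul_re_le_one hρ', min_le_left ε 1]

end Reduction

theorem stmt_13_general {d : ℕ} (t : ℝ) (ht : t ∈ Set.Ioo (0:ℝ) 1)
    (𝓟 𝓔 : Set (Matrix (Fin d) (Fin d) ℂ))
    (h𝓟 : ∀ ρ ∈ 𝓟, IsDensityMatrix ρ) (h𝓔 : ∀ τ ∈ 𝓔, IsDensityMatrix τ) :
    sInf {e : ℝ | e ∈ Set.Icc (0:ℝ) 1 ∧
        ∃ F : Matrix (Fin d) (Fin d) ℂ →ₗ[ℂ] Matrix (Fin 2) (Fin 2) ℂ,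
          IsCPTP F ∧ (∀ ρ ∈ 𝓟, traceDist (F ρ) ket1 ≤ e) ∧
          ∀ τ ∈ 𝓔, ∃ Mτ : ℝ, 1/t ≤ Mτ ∧ F τ = piM Mτ} =
      sInf {a : ℝ | ∃ E : Matrix (Fin d) (Fin d) ℂ, IsTest E ∧
        (∀ τ ∈ 𝓔, (E * τ).trace.re ≤ t) ∧
        a = sSup {r : ℝ | ∃ ρ ∈ 𝓟, r = ((1 - E) * ρ).trace.re}} := by
  obtain ⟨ht₀, ht₁⟩ := ht
  have htriv : IsTest (t • 1 : Matrix (Fin d) (Fin d) ℂ) := isTest_smul_one ht₀.le ht₁.le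
  have htriv𝓔 : ∀ τ ∈ 𝓔, 0 < ((t • 1 : Matrix (Fin d) (Fin d) ℂ) * τ).trace.re ∧
      ((t • 1 : Matrix (Fin d) (Fin d) ℂ) * τ).trace.re ≤ t := fun τ hτ => by
    simp [(h𝓔 τ hτ).2, ht₀]
  apply le_antisymm
  · refine le_csInf ⟨_, _, htriv, fun τ hτ => (htriv𝓔 τ hτ).2, rfl⟩ ?_
    rintro _ ⟨E, hE, hE𝓔, rfl⟩
    refine le_of_forall_pos_le_add fun ε hε => ?_
    obtain ⟨E', hE', hE'𝓔, hle⟩ := hE.exists_trace_mul_pos ht₀ ht₁.le hε h𝓟 h𝓔 hE𝓔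
    exact csInf_le_of_le ⟨0, fun e he => he.1.1⟩ (hE'.exists_channel h𝓟 h𝓔 hE'𝓔) hle
  · refine le_csInf ?_ ?_
    · exact ⟨_, htriv.exists_channel h𝓟 h𝓔 htriv𝓔⟩
    rintro e ⟨he, F, hF, hF𝓟, hF𝓔⟩
    refine csInf_le_of_le ?_ ⟨_, hF.isTest_choiBlock_one, fun τ hτ => ?_, rfl⟩
      (typeIError_choiBlock_one_le hF h𝓟 he.1 hF𝓟)
    · exact ⟨0, by rintro _ ⟨E, hE, -, rfl⟩; exact typeIError_nonneg h𝓟 hE⟩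
    · obtain ⟨M, hM, hFτ⟩ := hF𝓔 τ hτ
      exact trace_choiBlock_one_mul_re_le ht₀ hM hFτ

/-- the optimal error for work extraction into a dirty battery at
type-II threshold `t` equals the optimal constrained hypothesis-testing error. -/
theorem stmt_13 {d : ℕ} (t : ℝ) (ht : t ∈ Set.Ioo (0:ℝ) 1)
    (𝓟 𝓔 : Set (Matrix (Fin d) (Fin d) ℂ))
    (h𝓟ne : 𝓟.Nonempty) (h𝓔ne : 𝓔.Nonempty)
    (h𝓟 : ∀ ρ ∈ 𝓟, IsDensityMatrix ρ) (h𝓔 : ∀ τ ∈ 𝓔, IsDensityMatrix τ) :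
    sInf {e : ℝ | e ∈ Set.Icc (0:ℝ) 1 ∧
        ∃ F : Matrix (Fin d) (Fin d) ℂ →ₗ[ℂ] Matrix (Fin 2) (Fin 2) ℂ,
          IsCPTP F ∧ (∀ ρ ∈ 𝓟, traceDist (F ρ) ket1 ≤ e) ∧
          ∀ τ ∈ 𝓔, ∃ Mτ : ℝ, 1/t ≤ Mτ ∧ F τ = piM Mτ} =
      sInf {a : ℝ | ∃ E : Matrix (Fin d) (Fin d) ℂ, IsTest E ∧
        (∀ τ ∈ 𝓔, (E * τ).trace.re ≤ t) ∧
        a = sSup {r : ℝ | ∃ ρ ∈ 𝓟, r = ((1 - E) * ρ).trace.re}} :=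
  stmt_13_general t ht 𝓟 𝓔 h𝓟 h𝓔
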